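/- arXiv:2003.05062 — 6 statements merged into one kernel-verified Lean document; each statement's English description precedes it below -/
import Mathlib

section
/- Let (M,γ) be a 2-dimensional Riemannian manifold, ρ a smooth 1-form with dual vector field ρ♯, and ∇ the metric connection ∇_X Y = ∇*_X Y − ρ(Y)X + γ(X,Y)ρ♯, where ∇* is the Levi-Civita connection. If the curvature tensor of ∇ vanishes identically, then the Gauss curvature κ* of γ satisfies κ* = −div*(ρ♯), where div* is the divergence with respect to γ. -/
/-!  An abstract model of the calculus of smooth vector fields on a Riemannian manifold:
`F` plays the role of the algebra of smooth functions, `V` the `F`-module of smooth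
vector fields, `γ` the Riemannian metric, `D X f` the directional derivative `X f`,
and `bracket` the Lie bracket of vector fields. -/

variable {F V : Type*} [CommRing F] [Algebra ℝ F] [AddCommGroup V] [Module F V]

/-- `nabla` is a linear connection (with directional derivative operator `D`). -/
def IsConnection (D : V → F → F) (nabla : V → V → V) : Prop :=
  (∀ X Y Z : V, nabla (X + Y) Z = nabla X Z + nabla Y Z) ∧
  (∀ (f : F) (X Y : V), nabla (f • X) Y = f • nabla X Y) ∧
  (∀ X Y Z : V, nabla X (Y + Z) = nabla X Y + nabla X Z) ∧
  (∀ (X : V) (f : F) (Y : V), nabla X (f • Y) = D X f • Y + f • nabla X Y)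

/-- `nabla` is metrical with respect to the metric `γ`, i.e. `∇γ = 0`. -/
def IsMetrical (γ : V →ₗ[F] V →ₗ[F] F) (D : V → F → F) (nabla : V → V → V) : Prop :=
  ∀ X Y Z : V, D X (γ Y Z) = γ (nabla X Y) Z + γ Y (nabla X Z)

/-- The torsion tensor `T(X,Y) = ∇_X Y − ∇_Y X − [X,Y]` of a connection. -/
def torsionT (bracket : V → V → V) (nabla : V → V → V) (X Y : V) : V :=
  nabla X Y - nabla Y X - bracket X Y

/-- The curvature tensor `R(X,Y)Z = ∇_X ∇_Y Z − ∇_Y ∇_X Z − ∇_{[X,Y]} Z`. -/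
def curvatureR (bracket : V → V → V) (nabla : V → V → V) (X Y Z : V) : V :=
  nabla X (nabla Y Z) - nabla Y (nabla X Z) - nabla (bracket X Y) Z

/-! Write the semi-symmetric connection as `∇ = ∇* + A`. Since `∇*` is metric and torsion-free,
the curvature of `∇` differs from `R*` by terms linear in `∇*ρ♯` and quadratic in `ρ`. Pairing
`R(E₁,E₂)E₂` with `E₁` for an orthonormal frame, the linear terms add up to `div* ρ♯`, while the
quadratic ones leave `ρ(E₁)² + ρ(E₂)² − ρ(ρ♯)`, which vanishes in dimension two by Parseval's
identity. -/

def semiSymmetricConnection (γ : V →ₗ[F] V →ₗ[F] F) (ρ : V →ₗ[F] F) (ρs : V)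
    (nabla : V → V → V) (X Y : V) : V :=
  nabla X Y - ρ Y • X + γ X Y • ρs

omit [Algebra ℝ F] in
theorem curvatureR_semiSymmetricConnection
    {γ : V →ₗ[F] V →ₗ[F] F} (hγsymm : ∀ X Y : V, γ X Y = γ Y X)
    {D : V → F → F} {bracket : V → V → V} {nabla : V → V → V}
    (hC : IsConnection D nabla) (hM : IsMetrical γ D nabla)
    (hTfree : ∀ X Y : V, torsionT bracket nabla X Y = 0)
    {ρ : V →ₗ[F] F} {ρs : V} (hρs : ∀ X : V, γ ρs X = ρ X) (X Y Z : V) :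
    curvatureR bracket (semiSymmetricConnection γ ρ ρs nabla) X Y Z =
      curvatureR bracket nabla X Y Z
        + γ (nabla Y ρs) Z • X - γ (nabla X ρs) Z • Y
        + γ Y Z • nabla X ρs - γ X Z • nabla Y ρs
        + ρ Z • (ρ Y • X - ρ X • Y) + ρ ρs • (γ X Z • Y - γ Y Z • X)
        + (γ Y Z * ρ X - γ X Z * ρ Y) • ρs := by
  obtain ⟨-, -, hadd, hleib⟩ := hC
  have hsub : ∀ X Y Z : V, nabla X (Y - Z) = nabla X Y - nabla X Z := fun X Y Z =>
    eq_sub_of_add_eq (by rw [← hadd, sub_add_cancel])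
  have hbr : bracket X Y = nabla X Y - nabla Y X := (sub_eq_zero.mp (hTfree X Y)).symm
  have hγD : ∀ X Y Z : V, D X (γ Y Z) = γ (nabla X Y) Z + γ Y (nabla X Z) := hM
  have hγρ : ∀ X : V, γ X ρs = ρ X := fun X => (hγsymm X ρs).trans (hρs X)
  have hρD : ∀ X Z : V, D X (ρ Z) = γ (nabla X ρs) Z + ρ (nabla X Z) := by
    intro X Z; rw [← hρs, hγD, hρs]
  simp only [curvatureR, semiSymmetricConnection, hadd, hsub, hleib, hρD, hγD, map_add, map_sub,
    map_smul, LinearMap.sub_apply, smul_eq_mul, hbr, hγρ]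
  rw [hγsymm X Y]
  module

omit [Algebra ℝ F] in
theorem sum_apply_mul_apply_of_orthonormal_frame {γ : V →ₗ[F] V →ₗ[F] F}
    (hγsymm : ∀ X Y : V, γ X Y = γ Y X) {E1 E2 : V}
    (h11 : γ E1 E1 = 1) (h22 : γ E2 E2 = 1) (h12 : γ E1 E2 = 0)
    (hspan : ∀ v : V, ∃ a b : F, v = a • E1 + b • E2) (v w : V) :
    γ v E1 * γ w E1 + γ v E2 * γ w E2 = γ v w := by
  obtain ⟨a, b, rfl⟩ := hspan w
  simp only [map_add, map_smul, LinearMap.add_apply, LinearMap.smul_apply, smul_eq_mul, h11, h22,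
    h12, hγsymm E2 E1]
  ring

/-- On a 2-dimensional Riemannian manifold (modelled by a global
`γ`-orthonormal frame `E1, E2` spanning the module of vector fields), if the
semi-symmetric metric connection `∇_X Y = ∇*_X Y − ρ(Y)X + γ(X,Y)ρ♯` is flat, then the
Gauss curvature `κ* = γ(R*(E1,E2)E2, E1)` satisfies `κ* = −div* ρ♯`, where
`div* ρ♯ = γ(∇*_{E1} ρ♯, E1) + γ(∇*_{E2} ρ♯, E2)`. -/
theorem flatness_gives_divergence_representation
    (γ : V →ₗ[F] V →ₗ[F] F) (hγsymm : ∀ X Y : V, γ X Y = γ Y X)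
    (D : V → F → F) (bracket : V → V → V)
    (nablaStar : V → V → V)
    (hC : IsConnection D nablaStar) (hM : IsMetrical γ D nablaStar)
    (hTfree : ∀ X Y : V, torsionT bracket nablaStar X Y = 0)
    (ρ : V →ₗ[F] F) (ρs : V) (hρs : ∀ X : V, γ ρs X = ρ X)
    (E1 E2 : V)
    (h11 : γ E1 E1 = 1) (h22 : γ E2 E2 = 1) (h12 : γ E1 E2 = 0)
    (hspan : ∀ v : V, ∃ a b : F, v = a • E1 + b • E2)
    (hflat : ∀ X Y Z : V,
      curvatureR bracket (fun X Y => nablaStar X Y - ρ Y • X + γ X Y • ρs) X Y Z = 0) :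
    γ (curvatureR bracket nablaStar E1 E2 E2) E1
      = -(γ (nablaStar E1 ρs) E1 + γ (nablaStar E2 ρs) E2) := by
  have h21 : γ E2 E1 = 0 := (hγsymm E2 E1).trans h12
  have hnorm : ρ ρs = ρ E1 * ρ E1 + ρ E2 * ρ E2 := by
    rw [← hρs, ← sum_apply_mul_apply_of_orthonormal_frame hγsymm h11 h22 h12 hspan, hρs, hρs]
  have hcurv := congrArg (γ · E1) <|
    (curvatureR_semiSymmetricConnection hγsymm hC hM hTfree hρs E1 E2 E2).symm.trans
      (hflat E1 E2 E2)
  simp only [map_add, map_sub, map_smul, map_zero, LinearMap.add_apply, LinearMap.sub_apply,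
    LinearMap.smul_apply, LinearMap.zero_apply, smul_eq_mul, h11, h22, h12, h21, hρs] at hcurv
  linear_combination hcurv + hnorm
end

section
/- Let f : ℝ² → ℝ be smooth, ρ the 1-form with components ρ₁ = −∂f/∂u², ρ₂ = ∂f/∂u¹, and let c : [0,1] → ℝ² be a smooth curve with φ := f ∘ c. Then the parallel transport equations of the metric connection with torsion T(X,Y) = ρ(X)Y − ρ(Y)X on the Euclidean plane reduce to the linear system (X¹)' = φ' X², (X²)' = −φ' X¹, whose general solution is X¹(t) = r₀ cos(φ(t) + φ₀), X²(t) = −r₀ sin(φ(t) + φ₀) with constants r₀ ≥ 0 and φ₀. -/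
/-- The partial derivative `∂f/∂u¹` of a function on the plane. -/
noncomputable def pd1 (f : ℝ × ℝ → ℝ) (p : ℝ × ℝ) : ℝ := fderiv ℝ f p (1, 0)

/-- The partial derivative `∂f/∂u²` of a function on the plane. -/
noncomputable def pd2 (f : ℝ × ℝ → ℝ) (p : ℝ × ℝ) : ℝ := fderiv ℝ f p (0, 1)

/-- On the Euclidean plane, for the semi-symmetric metric connection
determined by the stream function `f` (so `ρ₁ = −∂f/∂u²`, `ρ₂ = ∂f/∂u¹`), the parallel
transport equations along a curve `c` reduce to the linear system
`(X¹)' = φ' X²`, `(X²)' = −φ' X¹` with `φ = f ∘ c`, whose general solution is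
`X¹ = r₀ cos(φ + φ₀)`, `X² = −r₀ sin(φ + φ₀)`. -/
theorem euclidean_parallel_transport (f : ℝ × ℝ → ℝ) (hf : ContDiff ℝ (⊤ : ℕ∞) f)
    (c : ℝ → ℝ × ℝ) (hc : ContDiff ℝ (⊤ : ℕ∞) c)
    (X1 X2 : ℝ → ℝ) (hX1 : Differentiable ℝ X1) (hX2 : Differentiable ℝ X2) :
    ((∀ t : ℝ,
        deriv X1 t = X2 t * (deriv (fun s => (c s).1) t * pd1 f (c t)
          - deriv (fun s => (c s).2) t * (- pd2 f (c t))) ∧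
        deriv X2 t = X1 t * (deriv (fun s => (c s).2) t * (- pd2 f (c t))
          - deriv (fun s => (c s).1) t * pd1 f (c t))) ↔
      (∀ t : ℝ, deriv X1 t = deriv (fun s => f (c s)) t * X2 t ∧
        deriv X2 t = - (deriv (fun s => f (c s)) t * X1 t))) ∧
    ((∀ t : ℝ, deriv X1 t = deriv (fun s => f (c s)) t * X2 t ∧
        deriv X2 t = - (deriv (fun s => f (c s)) t * X1 t)) ↔
      ∃ r0 : ℝ, 0 ≤ r0 ∧ ∃ φ0 : ℝ, ∀ t : ℝ,
        X1 t = r0 * Real.cos (f (c t) + φ0) ∧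
        X2 t = - (r0 * Real.sin (f (c t) + φ0))) := by
  have hfd : Differentiable ℝ f := hf.differentiable (by simp)
  have hcd : Differentiable ℝ c := hc.differentiable (by simp)
  have hφd : Differentiable ℝ (fun s => f (c s)) := hfd.comp hcd
  -- chain rule
  have hkey : ∀ t : ℝ, deriv (fun s => f (c s)) t
      = deriv (fun s => (c s).1) t * pd1 f (c t)
        + deriv (fun s => (c s).2) t * pd2 f (c t) := by
    intro t
    have hct : HasDerivAt c (deriv c t) t := (hcd t).hasDerivAt
    have h1 : HasDerivAt (fun s => (c s).1) (deriv c t).1 t := hct.fst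
    have h2 : HasDerivAt (fun s => (c s).2) (deriv c t).2 t := hct.snd
    have hcomp : HasDerivAt (fun s => f (c s)) (fderiv ℝ f (c t) (deriv c t)) t :=
      (hfd (c t)).hasFDerivAt.comp_hasDerivAt t hct
    have hv : (deriv c t) = (deriv c t).1 • ((1:ℝ), (0:ℝ)) + (deriv c t).2 • ((0:ℝ), (1:ℝ)) := by
      ext <;> simp
    rw [hcomp.deriv, h1.deriv, h2.deriv, hv, map_add, map_smul, map_smul]
    simp [pd1, pd2, smul_eq_mul]
  constructor
  · constructor
    · intro h t
      obtain ⟨h1, h2⟩ := h t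
      rw [hkey t]
      exact ⟨h1.trans (by ring), h2.trans (by ring)⟩
    · intro h t
      obtain ⟨h1, h2⟩ := h t
      rw [hkey t] at h1 h2
      exact ⟨h1.trans (by ring), h2.trans (by ring)⟩
  · constructor
    · intro h
      set φ : ℝ → ℝ := fun s => f (c s) with hφdef
      have hAd : ∀ t, HasDerivAt (fun t => X1 t * Real.cos (φ t) - X2 t * Real.sin (φ t)) 0 t := by
        intro t
        obtain ⟨h1, h2⟩ := h t
        have hφt : HasDerivAt φ (deriv φ t) t := (hφd t).hasDerivAt
        have := (((hX1 t).hasDerivAt.mul hφt.cos).sub ((hX2 t).hasDerivAt.mul hφt.sin))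
        convert this using 1
        · rfl
        · rfl
        · rfl
        rw [h1, h2]; ring
      have hBd : ∀ t, HasDerivAt (fun t => X1 t * Real.sin (φ t) + X2 t * Real.cos (φ t)) 0 t := by
        intro t
        obtain ⟨h1, h2⟩ := h t
        have hφt : HasDerivAt φ (deriv φ t) t := (hφd t).hasDerivAt
        have := (((hX1 t).hasDerivAt.mul hφt.sin).add ((hX2 t).hasDerivAt.mul hφt.cos))
        convert this using 1
        · rfl
        · rfl
        · rfl
        rw [h1, h2]; ring
      set a : ℝ := X1 0 * Real.cos (φ 0) - X2 0 * Real.sin (φ 0) with hadef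
      set b : ℝ := X1 0 * Real.sin (φ 0) + X2 0 * Real.cos (φ 0) with hbdef
      have hAc : ∀ t, X1 t * Real.cos (φ t) - X2 t * Real.sin (φ t) = a := fun t =>
        is_const_of_deriv_eq_zero (fun s => (hAd s).differentiableAt)
          (fun s => (hAd s).deriv) t 0
      have hBc : ∀ t, X1 t * Real.sin (φ t) + X2 t * Real.cos (φ t) = b := fun t =>
        is_const_of_deriv_eq_zero (fun s => (hBd s).differentiableAt)
          (fun s => (hBd s).deriv) t 0
      have hsol : ∀ t, X1 t = a * Real.cos (φ t) + b * Real.sin (φ t)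
          ∧ X2 t = -a * Real.sin (φ t) + b * Real.cos (φ t) := by
        intro t
        have ha := hAc t
        have hb := hBc t
        have hsc := Real.sin_sq_add_cos_sq (φ t)
        constructor
        · linear_combination Real.cos (φ t) * ha + Real.sin (φ t) * hb - X1 t * hsc
        · linear_combination (-Real.sin (φ t)) * ha + Real.cos (φ t) * hb - X2 t * hsc
      by_cases hz : (⟨a, b⟩ : ℂ) = 0
      · refine ⟨0, le_refl 0, 0, fun t => ?_⟩
        have ha : a = 0 := by simpa using congrArg Complex.re hz
        have hb : b = 0 := by simpa using congrArg Complex.im hz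
        obtain ⟨e1, e2⟩ := hsol t
        rw [ha, hb] at e1 e2
        constructor <;> simp [e1, e2]
      · set z : ℂ := ⟨a, b⟩ with hzdef
        refine ⟨‖z‖, norm_nonneg z, -z.arg, fun t => ?_⟩
        have hca : ‖z‖ * Real.cos z.arg = a := by
          rw [Complex.cos_arg hz]
          field_simp [norm_ne_zero_iff.mpr hz]
          rfl
        have hsa : ‖z‖ * Real.sin z.arg = b := by
          rw [Complex.sin_arg]
          field_simp [norm_ne_zero_iff.mpr hz]
          rfl
        obtain ⟨e1, e2⟩ := hsol t
        have hc1 : Real.cos (f (c t) + -z.arg)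
            = Real.cos (φ t) * Real.cos z.arg + Real.sin (φ t) * Real.sin z.arg := by
          rw [← Real.cos_sub, sub_eq_add_neg]
        have hc2 : Real.sin (f (c t) + -z.arg)
            = Real.sin (φ t) * Real.cos z.arg - Real.cos (φ t) * Real.sin z.arg := by
          rw [← Real.sin_sub, sub_eq_add_neg]
        constructor
        · rw [e1, hc1]
          linear_combination (-Real.cos (φ t)) * hca + (-Real.sin (φ t)) * hsa
        · rw [e2, hc2]
          linear_combination Real.sin (φ t) * hca + (-Real.cos (φ t)) * hsa
    · rintro ⟨r0, hr0, φ0, hX⟩ t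
      have e1 : X1 = fun s => r0 * Real.cos (f (c s) + φ0) := funext fun s => (hX s).1
      have e2 : X2 = fun s => -(r0 * Real.sin (f (c s) + φ0)) := funext fun s => (hX s).2
      have hφt : HasDerivAt (fun s => f (c s)) (deriv (fun s => f (c s)) t) t :=
        (hφd t).hasDerivAt
      have h1 : HasDerivAt (fun s => r0 * Real.cos (f (c s) + φ0))
          (r0 * (-Real.sin (f (c t) + φ0) * deriv (fun s => f (c s)) t)) t :=
        ((hφt.add_const φ0).cos).const_mul r0
      have h2 : HasDerivAt (fun s => -(r0 * Real.sin (f (c s) + φ0)))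
          (-(r0 * (Real.cos (f (c t) + φ0) * deriv (fun s => f (c s)) t))) t :=
        (((hφt.add_const φ0).sin).const_mul r0).neg
      constructor
      · rw [e1, h1.deriv, (hX t).2]; ring
      · rw [e2, h2.deriv, (hX t).1]; ring
end

section
/- Let φ : [0,1] → ℝ be smooth with φ(0) = φ(1) (for instance φ = f ∘ c for a closed curve c). Then any solution of (X¹)' = φ' X², (X²)' = −φ' X¹ satisfies X(0) = X(1). Hence the holonomy of the corresponding connection around any closed curve is the identity. -/
/-- If `φ(0) = φ(1)` (e.g. `φ = f ∘ c` for a closed curve `c`), then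
any solution of `(X¹)' = φ' X²`, `(X²)' = −φ' X¹` satisfies `X(0) = X(1)`: the holonomy
around any closed curve is the identity. -/
theorem trivial_holonomy (φ X1 X2 : ℝ → ℝ)
    (hφ : ContDiff ℝ (⊤ : ℕ∞) φ) (hφ01 : φ 0 = φ 1)
    (hX1 : Differentiable ℝ X1) (hX2 : Differentiable ℝ X2)
    (h1 : ∀ t : ℝ, deriv X1 t = deriv φ t * X2 t)
    (h2 : ∀ t : ℝ, deriv X2 t = - (deriv φ t * X1 t)) :
    X1 0 = X1 1 ∧ X2 0 = X2 1 := by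
  have hφd : Differentiable ℝ φ := hφ.differentiable (by simp)
  have hU : ∀ t : ℝ, HasDerivAt (fun s => X1 s * Real.cos (φ s) - X2 s * Real.sin (φ s)) 0 t := by
    intro t
    have hφt : HasDerivAt φ (deriv φ t) t := (hφd t).hasDerivAt
    have hc : HasDerivAt (fun s => Real.cos (φ s)) (-Real.sin (φ t) * deriv φ t) t :=
      (Real.hasDerivAt_cos (φ t)).comp t hφt
    have hs : HasDerivAt (fun s => Real.sin (φ s)) (Real.cos (φ t) * deriv φ t) t :=
      (Real.hasDerivAt_sin (φ t)).comp t hφt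
    have h := (((hX1 t).hasDerivAt.mul hc).sub ((hX2 t).hasDerivAt.mul hs))
    have heq : deriv X1 t * Real.cos (φ t) + X1 t * (-Real.sin (φ t) * deriv φ t)
        - (deriv X2 t * Real.sin (φ t) + X2 t * (Real.cos (φ t) * deriv φ t)) = 0 := by
      rw [h1, h2]; ring
    rwa [heq] at h
  have hV : ∀ t : ℝ, HasDerivAt (fun s => X1 s * Real.sin (φ s) + X2 s * Real.cos (φ s)) 0 t := by
    intro t
    have hφt : HasDerivAt φ (deriv φ t) t := (hφd t).hasDerivAt
    have hc : HasDerivAt (fun s => Real.cos (φ s)) (-Real.sin (φ t) * deriv φ t) t :=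
      (Real.hasDerivAt_cos (φ t)).comp t hφt
    have hs : HasDerivAt (fun s => Real.sin (φ s)) (Real.cos (φ t) * deriv φ t) t :=
      (Real.hasDerivAt_sin (φ t)).comp t hφt
    have h := (((hX1 t).hasDerivAt.mul hs).add ((hX2 t).hasDerivAt.mul hc))
    have heq : deriv X1 t * Real.sin (φ t) + X1 t * (Real.cos (φ t) * deriv φ t)
        + (deriv X2 t * Real.cos (φ t) + X2 t * (-Real.sin (φ t) * deriv φ t)) = 0 := by
      rw [h1, h2]; ring
    rwa [heq] at h
  have hUc := is_const_of_deriv_eq_zero (f := fun s => X1 s * Real.cos (φ s) - X2 s * Real.sin (φ s))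
    (fun t => (hU t).differentiableAt) (fun t => (hU t).deriv) 0 1
  have hVc := is_const_of_deriv_eq_zero (f := fun s => X1 s * Real.sin (φ s) + X2 s * Real.cos (φ s))
    (fun t => (hV t).differentiableAt) (fun t => (hV t).deriv) 0 1
  simp only [hφ01] at hUc hVc
  have hpyth := Real.sin_sq_add_cos_sq (φ 1)
  constructor
  · linear_combination Real.cos (φ 1) * hUc + Real.sin (φ 1) * hVc - (X1 0 - X1 1) * hpyth
  · linear_combination -Real.sin (φ 1) * hUc + Real.cos (φ 1) * hVc - (X2 0 - X2 1) * hpyth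
end

section
/- Every solution of the system (X¹)' + X²φ' − X¹(c²)'/c² = 0, (X²)' − X¹φ' − X²(c²)'/c² = 0 (with c² > 0 smooth and φ smooth) has constant hyperbolic norm: ((X¹(t))² + (X²(t))²)/(c²(t))² is constant in t. Moreover, if c(0) = c(1) and φ(0) = φ(1), then X(0) = X(1). -/
/-- Every solution of the hyperbolic parallel transport system
`(X¹)' + X²φ' − X¹(c²)'/c² = 0`, `(X²)' − X¹φ' − X²(c²)'/c² = 0` (with `c² > 0`) has
constant hyperbolic norm `((X¹)² + (X²)²)/(c²)²`; moreover, if `c(0) = c(1)` and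
`φ(0) = φ(1)`, then `X(0) = X(1)` (trivial holonomy along closed curves). -/
theorem hyperbolic_norm_constant_and_trivial_holonomy
    (c : ℝ → ℝ × ℝ) (hc : ContDiff ℝ (⊤ : ℕ∞) c) (hcpos : ∀ t : ℝ, 0 < (c t).2)
    (φ : ℝ → ℝ) (hφ : ContDiff ℝ (⊤ : ℕ∞) φ)
    (X1 X2 : ℝ → ℝ) (hX1 : Differentiable ℝ X1) (hX2 : Differentiable ℝ X2)
    (h1 : ∀ t : ℝ, deriv X1 t + X2 t * deriv φ t
      - X1 t * (deriv (fun s => (c s).2) t / (c t).2) = 0)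
    (h2 : ∀ t : ℝ, deriv X2 t - X1 t * deriv φ t
      - X2 t * (deriv (fun s => (c s).2) t / (c t).2) = 0) :
    (∀ s t : ℝ, (X1 t ^ 2 + X2 t ^ 2) / (c t).2 ^ 2
      = (X1 s ^ 2 + X2 s ^ 2) / (c s).2 ^ 2) ∧
    (c 0 = c 1 → φ 0 = φ 1 → X1 0 = X1 1 ∧ X2 0 = X2 1) := by
  have hgdiff : Differentiable ℝ (fun s => (c s).2) :=
    (hc.differentiable (by simp)).snd
  have hgne : ∀ t, (c t).2 ≠ 0 := fun t => (hcpos t).ne'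
  have hφdiff : Differentiable ℝ φ := hφ.differentiable (by simp)
  set g : ℝ → ℝ := fun s => (c s).2 with hgdef
  set Y1 : ℝ → ℝ := fun t => X1 t / g t with hY1def
  set Y2 : ℝ → ℝ := fun t => X2 t / g t with hY2def
  have hY1d : ∀ t, HasDerivAt Y1 (-(Y2 t * deriv φ t)) t := by
    intro t
    have h := ((hX1 t).hasDerivAt.div (hgdiff t).hasDerivAt (hgne t))
    convert h using 1
    iterate 3 rfl
    have e1 : deriv X1 t = X1 t * (deriv g t / g t) - X2 t * deriv φ t := by
      have := h1 t; linarith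
    rw [e1, hY2def]
    field_simp [hgne t, show g t ≠ 0 from hgne t]
    ring
  have hY2d : ∀ t, HasDerivAt Y2 (Y1 t * deriv φ t) t := by
    intro t
    have h := ((hX2 t).hasDerivAt.div (hgdiff t).hasDerivAt (hgne t))
    convert h using 1
    iterate 3 rfl
    have e2 : deriv X2 t = X1 t * deriv φ t + X2 t * (deriv g t / g t) := by
      have := h2 t; linarith
    rw [e2, hY1def]
    field_simp [hgne t, show g t ≠ 0 from hgne t]
    ring
  set Z1 : ℝ → ℝ := fun t => Y1 t * Real.cos (φ t) + Y2 t * Real.sin (φ t) with hZ1def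
  set Z2 : ℝ → ℝ := fun t => -Y1 t * Real.sin (φ t) + Y2 t * Real.cos (φ t) with hZ2def
  have hcos : ∀ t, HasDerivAt (fun t => Real.cos (φ t)) (-Real.sin (φ t) * deriv φ t) t :=
    fun t => (Real.hasDerivAt_cos (φ t)).comp t (hφdiff t).hasDerivAt
  have hsin : ∀ t, HasDerivAt (fun t => Real.sin (φ t)) (Real.cos (φ t) * deriv φ t) t :=
    fun t => (Real.hasDerivAt_sin (φ t)).comp t (hφdiff t).hasDerivAt
  have hZ1d : ∀ t, HasDerivAt Z1 0 t := by
    intro t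
    have h := ((hY1d t).mul (hcos t)).add ((hY2d t).mul (hsin t))
    convert h using 1
    iterate 3 rfl
    ring
  have hZ2d : ∀ t, HasDerivAt Z2 0 t := by
    intro t
    have h := (((hY1d t).neg.mul (hsin t))).add ((hY2d t).mul (hcos t))
    convert h using 1
    iterate 3 rfl
    simp only [Pi.neg_apply]
    ring
  have hZ1c : ∀ s t : ℝ, Z1 t = Z1 s := fun s t =>
    is_const_of_deriv_eq_zero (fun x => (hZ1d x).differentiableAt)
      (fun x => (hZ1d x).deriv) t s
  have hZ2c : ∀ s t : ℝ, Z2 t = Z2 s := fun s t =>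
    is_const_of_deriv_eq_zero (fun x => (hZ2d x).differentiableAt)
      (fun x => (hZ2d x).deriv) t s
  have hnorm : ∀ t, (X1 t ^ 2 + X2 t ^ 2) / (c t).2 ^ 2 = Z1 t ^ 2 + Z2 t ^ 2 := by
    intro t
    have hpyth := Real.sin_sq_add_cos_sq (φ t)
    have hsq : Z1 t ^ 2 + Z2 t ^ 2 = Y1 t ^ 2 + Y2 t ^ 2 := by
      rw [hZ1def, hZ2def]
      linear_combination (Y1 t ^ 2 + Y2 t ^ 2) * hpyth
    rw [hsq, hY1def, hY2def]
    field_simp [hgne t, show g t ≠ 0 from hgne t]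
    rfl
  have hY1rec : ∀ t, Y1 t = Z1 t * Real.cos (φ t) - Z2 t * Real.sin (φ t) := by
    intro t
    rw [hZ1def, hZ2def]
    have hpyth := Real.sin_sq_add_cos_sq (φ t)
    linear_combination (-(Y1 t)) * hpyth
  have hY2rec : ∀ t, Y2 t = Z1 t * Real.sin (φ t) + Z2 t * Real.cos (φ t) := by
    intro t
    rw [hZ1def, hZ2def]
    have hpyth := Real.sin_sq_add_cos_sq (φ t)
    linear_combination (-(Y2 t)) * hpyth
  have hXrec : ∀ t, X1 t = Y1 t * g t ∧ X2 t = Y2 t * g t := by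
    intro t
    exact ⟨(div_mul_cancel₀ (X1 t) (hgne t)).symm,
           (div_mul_cancel₀ (X2 t) (hgne t)).symm⟩
  refine ⟨fun s t => by rw [hnorm t, hnorm s, hZ1c s t, hZ2c s t], ?_⟩
  intro hce hφe
  have hge : g 0 = g 1 := by rw [hgdef]; simp [hce]
  have hY1e : Y1 0 = Y1 1 := by
    rw [hY1rec 0, hY1rec 1, hZ1c 1 0, hZ2c 1 0, hφe]
  have hY2e : Y2 0 = Y2 1 := by
    rw [hY2rec 0, hY2rec 1, hZ1c 1 0, hZ2c 1 0, hφe]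
  exact ⟨by rw [(hXrec 0).1, (hXrec 1).1, hY1e, hge],
         by rw [(hXrec 0).2, (hXrec 1).2, hY2e, hge]⟩
end

section
/- On the upper half-plane, for ρ = (1/u²)(du¹ − du²), the stream function is f(u¹,u²) = log u² (i.e., ρ₁ = ∂f/∂u², ρ₂ = −∂f/∂u¹ − 1/u²), and the parallel vector fields of the associated semi-symmetric metric connection along a curve c are X¹(t) = c²(t) r₀ cos(log c²(t) + φ₀), X²(t) = c²(t) r₀ sin(log c²(t) + φ₀). -/
/-- On the upper half-plane, for `ρ = (1/u²)(du¹ − du²)` the stream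
function is `f(u¹,u²) = log u²` (i.e. `ρ₁ = ∂f/∂u²`, `ρ₂ = −∂f/∂u¹ − 1/u²`), and the
parallel vector fields of the associated semi-symmetric metric connection along a curve
`c` are `X¹ = c² r₀ cos(log c² + φ₀)`, `X² = c² r₀ sin(log c² + φ₀)`. -/
theorem hyperbolic_example
    (c : ℝ → ℝ × ℝ) (hc : ContDiff ℝ (⊤ : ℕ∞) c) (hcpos : ∀ t : ℝ, 0 < (c t).2)
    (X1 X2 : ℝ → ℝ) (hX1 : Differentiable ℝ X1) (hX2 : Differentiable ℝ X2) :
    (∀ p : ℝ × ℝ, 0 < p.2 →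
        (1 / p.2 = pd2 (fun q => Real.log q.2) p ∧
         -(1 / p.2) = - pd1 (fun q => Real.log q.2) p - 1 / p.2)) ∧
    ((∀ t : ℝ,
        deriv X1 t + X2 t * deriv (fun s => Real.log (c s).2) t
          - X1 t * (deriv (fun s => (c s).2) t / (c t).2) = 0 ∧
        deriv X2 t - X1 t * deriv (fun s => Real.log (c s).2) t
          - X2 t * (deriv (fun s => (c s).2) t / (c t).2) = 0) ↔
      ∃ r0 : ℝ, 0 ≤ r0 ∧ ∃ φ0 : ℝ, ∀ t : ℝ,
        X1 t = (c t).2 * r0 * Real.cos (Real.log (c t).2 + φ0) ∧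
        X2 t = (c t).2 * r0 * Real.sin (Real.log (c t).2 + φ0)) := by
  have hcd : Differentiable ℝ fun t => (c t).2 := (hc.differentiable (by simp)).snd
  have hu : ∀ t, HasDerivAt (fun s => (c s).2) (deriv (fun s => (c s).2) t) t :=
    fun t => (hcd t).hasDerivAt
  have hune : ∀ t, (c t).2 ≠ 0 := fun t => (hcpos t).ne'
  have hφ : ∀ t, HasDerivAt (fun s => Real.log (c s).2)
      (deriv (fun s => (c s).2) t / (c t).2) t := by
    intro t
    have := (Real.hasDerivAt_log (hune t)).comp t (hu t)
    simpa [div_eq_inv_mul, Function.comp_def] using this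
  have hφderiv : ∀ t, deriv (fun s => Real.log (c s).2) t
      = deriv (fun s => (c s).2) t / (c t).2 := fun t => (hφ t).deriv
  constructor
  · intro p hp
    have hf : HasFDerivAt (fun q : ℝ × ℝ => Real.log q.2)
        ((p.2⁻¹ : ℝ) • ContinuousLinearMap.snd ℝ ℝ ℝ) p :=
      (Real.hasDerivAt_log hp.ne').comp_hasFDerivAt p hasFDerivAt_snd
    constructor
    · simp [pd2, hf.fderiv, one_div]
    · simp [pd1, hf.fderiv]
  · constructor
    · -- forward direction
      intro h
      set φ : ℝ → ℝ := fun s => Real.log (c s).2 with hφdef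
      set Z1 : ℝ → ℝ := fun s =>
        (X1 s * Real.cos (φ s) + X2 s * Real.sin (φ s)) / (c s).2 with hZ1def
      set Z2 : ℝ → ℝ := fun s =>
        (-(X1 s) * Real.sin (φ s) + X2 s * Real.cos (φ s)) / (c s).2 with hZ2def
      have hx1' : ∀ t, deriv X1 t =
          X1 t * (deriv (fun s => (c s).2) t / (c t).2)
            - X2 t * (deriv (fun s => (c s).2) t / (c t).2) := by
        intro t
        have := (h t).1
        rw [hφderiv t] at this
        linarith
      have hx2' : ∀ t, deriv X2 t =
          X2 t * (deriv (fun s => (c s).2) t / (c t).2)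
            + X1 t * (deriv (fun s => (c s).2) t / (c t).2) := by
        intro t
        have := (h t).2
        rw [hφderiv t] at this
        linarith
      have hcosd : ∀ t, HasDerivAt (fun s => Real.cos (φ s))
          (-Real.sin (φ t) * (deriv (fun s => (c s).2) t / (c t).2)) t :=
        fun t => (hφ t).cos
      have hsind : ∀ t, HasDerivAt (fun s => Real.sin (φ s))
          (Real.cos (φ t) * (deriv (fun s => (c s).2) t / (c t).2)) t :=
        fun t => (hφ t).sin
      have hZ1d : ∀ t, HasDerivAt Z1 0 t := by
        intro t
        have hN : HasDerivAt (fun s => X1 s * Real.cos (φ s) + X2 s * Real.sin (φ s))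
            (deriv X1 t * Real.cos (φ t)
              + X1 t * (-Real.sin (φ t) * (deriv (fun s => (c s).2) t / (c t).2))
              + (deriv X2 t * Real.sin (φ t)
              + X2 t * (Real.cos (φ t) * (deriv (fun s => (c s).2) t / (c t).2)))) t :=
          (((hX1 t).hasDerivAt.mul (hcosd t)).add ((hX2 t).hasDerivAt.mul (hsind t)))
        have hZ := hN.div (hu t) (hune t)
        have : ((deriv X1 t * Real.cos (φ t)
              + X1 t * (-Real.sin (φ t) * (deriv (fun s => (c s).2) t / (c t).2))
              + (deriv X2 t * Real.sin (φ t)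
              + X2 t * (Real.cos (φ t) * (deriv (fun s => (c s).2) t / (c t).2))))
              * (c t).2
            - (X1 t * Real.cos (φ t) + X2 t * Real.sin (φ t))
              * deriv (fun s => (c s).2) t) / (c t).2 ^ 2 = 0 := by
          rw [hx1' t, hx2' t]
          field_simp [hune t]
          ring
        rw [this] at hZ
        exact hZ
      have hZ2d : ∀ t, HasDerivAt Z2 0 t := by
        intro t
        have hN : HasDerivAt (fun s => -(X1 s) * Real.sin (φ s) + X2 s * Real.cos (φ s))
            ((-deriv X1 t) * Real.sin (φ t)
              + (-(X1 t)) * (Real.cos (φ t) * (deriv (fun s => (c s).2) t / (c t).2))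
              + (deriv X2 t * Real.cos (φ t)
              + X2 t * (-Real.sin (φ t) * (deriv (fun s => (c s).2) t / (c t).2)))) t :=
          ((((hX1 t).hasDerivAt.neg).mul (hsind t)).add ((hX2 t).hasDerivAt.mul (hcosd t)))
        have hZ := hN.div (hu t) (hune t)
        have : (((-deriv X1 t) * Real.sin (φ t)
              + (-(X1 t)) * (Real.cos (φ t) * (deriv (fun s => (c s).2) t / (c t).2))
              + (deriv X2 t * Real.cos (φ t)
              + X2 t * (-Real.sin (φ t) * (deriv (fun s => (c s).2) t / (c t).2))))
              * (c t).2
            - (-(X1 t) * Real.sin (φ t) + X2 t * Real.cos (φ t))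
              * deriv (fun s => (c s).2) t) / (c t).2 ^ 2 = 0 := by
          rw [hx1' t, hx2' t]
          field_simp [hune t]
          ring
        rw [this] at hZ
        exact hZ
      have hZ1c : ∀ t, Z1 t = Z1 0 :=
        fun t => is_const_of_deriv_eq_zero (fun s => (hZ1d s).differentiableAt)
          (fun s => (hZ1d s).deriv) t 0
      have hZ2c : ∀ t, Z2 t = Z2 0 :=
        fun t => is_const_of_deriv_eq_zero (fun s => (hZ2d s).differentiableAt)
          (fun s => (hZ2d s).deriv) t 0
      set a : ℝ := Z1 0 with hadef
      set b : ℝ := Z2 0 with hbdef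
      have hX1eq : ∀ t, X1 t = (c t).2 * (a * Real.cos (φ t) - b * Real.sin (φ t)) := by
        intro t
        have h1 : X1 t * Real.cos (φ t) + X2 t * Real.sin (φ t) = a * (c t).2 := by
          have := hZ1c t
          simp only [hZ1def] at this
          field_simp [hune t] at this
          linarith
        have h2 : -(X1 t) * Real.sin (φ t) + X2 t * Real.cos (φ t) = b * (c t).2 := by
          have := hZ2c t
          simp only [hZ2def] at this
          field_simp [hune t] at this
          linarith
        have hpyth := Real.sin_sq_add_cos_sq (φ t)
        linear_combination Real.cos (φ t) * h1 - Real.sin (φ t) * h2 - X1 t * hpyth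
      have hX2eq : ∀ t, X2 t = (c t).2 * (a * Real.sin (φ t) + b * Real.cos (φ t)) := by
        intro t
        have h1 : X1 t * Real.cos (φ t) + X2 t * Real.sin (φ t) = a * (c t).2 := by
          have := hZ1c t
          simp only [hZ1def] at this
          field_simp [hune t] at this
          linarith
        have h2 : -(X1 t) * Real.sin (φ t) + X2 t * Real.cos (φ t) = b * (c t).2 := by
          have := hZ2c t
          simp only [hZ2def] at this
          field_simp [hune t] at this
          linarith
        have hpyth := Real.sin_sq_add_cos_sq (φ t)
        linear_combination Real.sin (φ t) * h1 + Real.cos (φ t) * h2 - X2 t * hpyth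
      set z : ℂ := (a : ℂ) + (b : ℂ) * Complex.I with hzdef
      have hzre : z.re = a := by simp [hzdef]
      have hzim : z.im = b := by simp [hzdef]
      refine ⟨‖z‖, norm_nonneg z, Complex.arg z, fun t => ?_⟩
      rcases eq_or_ne z 0 with hz | hz
      · have ha : a = 0 := by rw [← hzre, hz]; simp
        have hb : b = 0 := by rw [← hzim, hz]; simp
        rw [hz]
        simp only [map_zero, norm_zero, mul_zero, zero_mul]
        exact ⟨by simp [hX1eq t, ha, hb], by simp [hX2eq t, ha, hb]⟩
      · have habs : ‖z‖ ≠ 0 := by simpa using hz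
        have hca : Real.cos z.arg = a / ‖z‖ := by
          rw [Complex.cos_arg hz, hzre]
        have hsa : Real.sin z.arg = b / ‖z‖ := by
          rw [Complex.sin_arg, hzim]
        constructor
        · rw [hX1eq t, Real.cos_add, hca, hsa]
          field_simp
          ring
        · rw [hX2eq t, Real.sin_add, hca, hsa]
          field_simp
          ring
    · -- backward direction
      rintro ⟨r0, hr0, φ0, hX⟩ t
      have hX1fun : X1 = fun s => (c s).2 * r0 * Real.cos (Real.log (c s).2 + φ0) :=
        funext fun s => (hX s).1
      have hX2fun : X2 = fun s => (c s).2 * r0 * Real.sin (Real.log (c s).2 + φ0) :=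
        funext fun s => (hX s).2
      have hθ : HasDerivAt (fun s => Real.log (c s).2 + φ0)
          (deriv (fun s => (c s).2) t / (c t).2) t := (hφ t).add_const φ0
      have h1 : HasDerivAt (fun s => (c s).2 * r0 * Real.cos (Real.log (c s).2 + φ0))
          (deriv (fun s => (c s).2) t * r0 * Real.cos (Real.log (c t).2 + φ0)
            + (c t).2 * r0 * (-Real.sin (Real.log (c t).2 + φ0)
              * (deriv (fun s => (c s).2) t / (c t).2))) t :=
        ((hu t).mul_const r0).mul hθ.cos
      have h2 : HasDerivAt (fun s => (c s).2 * r0 * Real.sin (Real.log (c s).2 + φ0))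
          (deriv (fun s => (c s).2) t * r0 * Real.sin (Real.log (c t).2 + φ0)
            + (c t).2 * r0 * (Real.cos (Real.log (c t).2 + φ0)
              * (deriv (fun s => (c s).2) t / (c t).2))) t :=
        ((hu t).mul_const r0).mul hθ.sin
      have hd1 : deriv X1 t = deriv (fun s => (c s).2) t * r0 * Real.cos (Real.log (c t).2 + φ0)
            + (c t).2 * r0 * (-Real.sin (Real.log (c t).2 + φ0)
              * (deriv (fun s => (c s).2) t / (c t).2)) := by
        rw [hX1fun]; exact h1.deriv
      have hd2 : deriv X2 t = deriv (fun s => (c s).2) t * r0 * Real.sin (Real.log (c t).2 + φ0)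
            + (c t).2 * r0 * (Real.cos (Real.log (c t).2 + φ0)
              * (deriv (fun s => (c s).2) t / (c t).2)) := by
        rw [hX2fun]; exact h2.deriv
      rw [hd1, hd2, hφderiv t, (hX t).1, (hX t).2]
      constructor <;> · field_simp [hune t]; ring
end

section
/- Let κ, g : ℝ² → ℝ be smooth with g > 0, X¹ : ℝ² → ℝ smooth, c : ℝ → ℝ smooth, c₀ ∈ ℝ, and define X²(u¹,u²) := −(1/g(u¹,u²)) (∫₀^{u²} [κ(u¹,t) g(u¹,t) + ∂₁(g X¹)(u¹,t)] dt + c(u¹) + c₀). Then (1/g)[∂₁(g X¹) + ∂₂(g X²)] = −κ. Moreover, if κ, g, X¹ are doubly periodic with periods (u¹₀, u²₀) satisfying ∫₀^{u²₀} [κ(u¹,t)g(u¹,t) + ∂₁(gX¹)(u¹,t)] dt = 0 for all u¹, and c is u¹₀-periodic, then X² is also doubly periodic with the same periods. -/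
open intervalIntegral
open MeasureTheory Metric Set

lemma aux_hasFDerivAt_param_integral (F : ℝ × ℝ → ℝ) (hF : ContDiff ℝ (⊤ : ℕ∞) F) (p : ℝ × ℝ) :
    ∃ L : ℝ × ℝ →L[ℝ] ℝ,
      HasFDerivAt (fun q : ℝ × ℝ => ∫ t in (0:ℝ)..q.2, F (q.1, t)) L p ∧ L (0, 1) = F p := by
  have hFc : Continuous F := hF.continuous
  have hint : ∀ (u a b : ℝ), IntervalIntegrable (fun t => F (u, t)) volume a b := fun u a b =>
    (hFc.comp (continuous_const.prodMk continuous_id)).intervalIntegrable a b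
  have hfderivc : Continuous (fderiv ℝ F) := hF.continuous_fderiv (by simp)
  have hpd1c : Continuous (pd1 F) := hfderivc.clm_apply continuous_const
  -- bound on fderiv on a compact set
  obtain ⟨q0, hq0K, hq0⟩ : ∃ q0 ∈ (closedBall p.1 1 ×ˢ uIcc (0:ℝ) p.2),
      ∀ q ∈ (closedBall p.1 1 ×ˢ uIcc (0:ℝ) p.2), ‖fderiv ℝ F q‖ ≤ ‖fderiv ℝ F q0‖ := by
    have hne : ((p.1, (0:ℝ)) : ℝ × ℝ) ∈ closedBall p.1 1 ×ˢ uIcc (0:ℝ) p.2 :=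
      ⟨by simp, Set.left_mem_uIcc⟩
    obtain ⟨q0, hq0K, hq0⟩ := ((isCompact_closedBall p.1 1).prod isCompact_uIcc).exists_isMaxOn
      ⟨_, hne⟩ (hfderivc.norm).continuousOn
    exact ⟨q0, hq0K, fun q hq => hq0 hq⟩
  set M : ℝ := ‖fderiv ℝ F q0‖ with hM
  -- Part A: derivative in the parameter
  have hA : HasDerivAt (fun u : ℝ => ∫ t in (0:ℝ)..p.2, F (u, t))
      (∫ t in (0:ℝ)..p.2, pd1 F (p.1, t)) p.1 := by
    refine (intervalIntegral.hasDerivAt_integral_of_dominated_loc_of_deriv_le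
      (F := fun u t => F (u, t)) (F' := fun u t => pd1 F (u, t)) (bound := fun _ => M)
      (s := ball p.1 1) (ball_mem_nhds _ zero_lt_one) ?_ (hint p.1 0 p.2) ?_ ?_ ?_ ?_).2
    · exact Filter.Eventually.of_forall fun u =>
        ((hFc.comp ((continuous_const (y := u)).prodMk continuous_id)).aestronglyMeasurable).restrict
    · exact ((hpd1c.comp (continuous_const.prodMk continuous_id)).aestronglyMeasurable).restrict
    · refine Filter.Eventually.of_forall fun t ht => fun x hx => ?_
      have h1 : ‖((1:ℝ), (0:ℝ))‖ = 1 := by simp [Prod.norm_def]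
      calc ‖pd1 F (x, t)‖ ≤ ‖fderiv ℝ F (x, t)‖ * ‖((1:ℝ),(0:ℝ))‖ :=
            (fderiv ℝ F (x, t)).le_opNorm _
        _ = ‖fderiv ℝ F (x, t)‖ := by rw [h1, mul_one]
        _ ≤ M := hq0 _ ⟨ball_subset_closedBall hx, Ioc_subset_Icc_self ht⟩
    · exact intervalIntegrable_const
    · refine Filter.Eventually.of_forall fun t ht => fun x hx => ?_
      have hline : HasDerivAt (fun u : ℝ => ((u, t) : ℝ × ℝ)) ((1:ℝ), (0:ℝ)) x :=
        (hasDerivAt_id x).prodMk (hasDerivAt_const x t)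
      exact (hF.differentiable (by simp) (x, t)).hasFDerivAt.comp_hasDerivAt x hline
  have hA' : HasFDerivAt (fun q : ℝ × ℝ => ∫ t in (0:ℝ)..p.2, F (q.1, t))
      ((∫ t in (0:ℝ)..p.2, pd1 F (p.1, t)) • (ContinuousLinearMap.fst ℝ ℝ ℝ)) p :=
    hA.comp_hasFDerivAt p hasFDerivAt_fst
  -- Part B: derivative in the endpoint
  have hB : HasFDerivAt (fun q : ℝ × ℝ => ∫ t in p.2..q.2, F (q.1, t))
      (F p • (ContinuousLinearMap.snd ℝ ℝ ℝ)) p := by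
    rw [hasFDerivAt_iff_isLittleO_nhds_zero, Asymptotics.isLittleO_iff]
    intro ε hε
    obtain ⟨δ, hδ, hδ'⟩ := Metric.continuousAt_iff.1 hFc.continuousAt ε hε
    filter_upwards [Metric.ball_mem_nhds (0 : ℝ × ℝ) hδ] with h hh
    have hnorm : ‖h‖ < δ := by simpa [mem_ball, dist_zero_right] using hh
    have key : ∀ t ∈ Set.uIoc p.2 ((p + h).2), ‖F ((p + h).1, t) - F p‖ ≤ ε := by
      intro t ht
      have hsum2 : (p + h).2 = p.2 + h.2 := rfl
      rw [hsum2] at ht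
      have ht1 : |t - p.2| ≤ |h.2| := by
        rcases Set.mem_uIoc.1 ht with h1 | h1 <;>
        · rw [abs_le]
          constructor <;> nlinarith [h1.1, h1.2, abs_nonneg h.2, le_abs_self h.2, neg_abs_le h.2]
      have hd : dist ((p + h).1, t) p < δ := by
        rw [Prod.dist_eq]
        have e1 : dist (p + h).1 p.1 = |h.1| := by
          simp [Prod.fst_add, Real.dist_eq]
        have e2 : dist t p.2 = |t - p.2| := Real.dist_eq _ _
        have hh1 : |h.1| ≤ ‖h‖ := by
          simpa [Real.norm_eq_abs] using norm_fst_le h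
        have hh2 : |h.2| ≤ ‖h‖ := by
          simpa [Real.norm_eq_abs] using norm_snd_le h
        calc max (dist (p+h).1 p.1) (dist t p.2) ≤ ‖h‖ := by
              rw [e1, e2]; exact max_le hh1 (ht1.trans hh2)
          _ < δ := hnorm
      have := hδ' hd
      rw [Real.dist_eq, ← Real.norm_eq_abs] at this
      exact this.le
    have hint1 : IntervalIntegrable (fun t => F ((p + h).1, t)) volume p.2 ((p+h).2) := hint _ _ _
    have hsplit : (∫ t in p.2..((p+h).2), F ((p + h).1, t)) - (∫ t in p.2..p.2, F (p.1, t))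
        - (F p • ContinuousLinearMap.snd ℝ ℝ ℝ) h
        = ∫ t in p.2..((p+h).2), (F ((p + h).1, t) - F p) := by
      rw [intervalIntegral.integral_sub hint1 intervalIntegrable_const,
        intervalIntegral.integral_same, intervalIntegral.integral_const]
      have : (p + h).2 = p.2 + h.2 := rfl
      simp [this, smul_eq_mul]
      ring
    calc ‖(∫ t in p.2..((p+h).2), F ((p + h).1, t)) - (∫ t in p.2..p.2, F (p.1, t))
          - (F p • ContinuousLinearMap.snd ℝ ℝ ℝ) h‖
        = ‖∫ t in p.2..((p+h).2), (F ((p + h).1, t) - F p)‖ := by rw [hsplit]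
      _ ≤ ε * |(p+h).2 - p.2| := intervalIntegral.norm_integral_le_of_norm_le_const key
      _ ≤ ε * ‖h‖ := by
          have : |(p+h).2 - p.2| = |h.2| := by
            have : (p + h).2 = p.2 + h.2 := rfl
            rw [this]; ring_nf
          rw [this]
          exact mul_le_mul_of_nonneg_left
            (by simpa [Real.norm_eq_abs] using norm_snd_le h) hε.le
  -- combine
  refine ⟨((∫ t in (0:ℝ)..p.2, pd1 F (p.1, t)) • (ContinuousLinearMap.fst ℝ ℝ ℝ))
      + F p • (ContinuousLinearMap.snd ℝ ℝ ℝ), ?_, ?_⟩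
  · have heq : (fun q : ℝ × ℝ => ∫ t in (0:ℝ)..q.2, F (q.1, t))
        = fun q : ℝ × ℝ => (∫ t in (0:ℝ)..p.2, F (q.1, t)) + ∫ t in p.2..q.2, F (q.1, t) := by
      funext q
      rw [intervalIntegral.integral_add_adjacent_intervals (hint q.1 0 p.2) (hint q.1 p.2 q.2)]
    rw [heq]
    exact hA'.add hB
  · simp

/-- With `g > 0` playing the role of `√det γ`, the vector field
`(X¹, X²)` with `X²(u¹,u²) = −(1/g)(∫₀^{u²} [κ g + ∂₁(g X¹)](u¹,t) dt + c(u¹) + c₀)`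
satisfies the divergence representation `(1/g)[∂₁(g X¹) + ∂₂(g X²)] = −κ`; moreover,
under the stated periodicity assumptions (including the vanishing of the period
integral), `X²` is doubly periodic with the same periods. -/
theorem divergence_representation_on_plane_cylinder_torus
    (κ g X1 : ℝ × ℝ → ℝ) (c : ℝ → ℝ) (c0 : ℝ)
    (hκ : ContDiff ℝ (⊤ : ℕ∞) κ) (hg : ContDiff ℝ (⊤ : ℕ∞) g) (hgpos : ∀ p : ℝ × ℝ, 0 < g p)
    (hX1 : ContDiff ℝ (⊤ : ℕ∞) X1) (hc : ContDiff ℝ (⊤ : ℕ∞) c)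
    (X2 : ℝ × ℝ → ℝ)
    (hX2 : ∀ p : ℝ × ℝ, X2 p = -(1 / g p) *
      ((∫ t in (0:ℝ)..p.2, (κ (p.1, t) * g (p.1, t) +
          pd1 (fun q => g q * X1 q) (p.1, t))) + c p.1 + c0)) :
    (∀ p : ℝ × ℝ, (1 / g p) *
        (pd1 (fun q => g q * X1 q) p + pd2 (fun q => g q * X2 q) p) = - κ p) ∧
    (∀ a b : ℝ,
      (∀ p : ℝ × ℝ, κ (p.1 + a, p.2 + b) = κ p) →
      (∀ p : ℝ × ℝ, g (p.1 + a, p.2 + b) = g p) →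
      (∀ p : ℝ × ℝ, X1 (p.1 + a, p.2 + b) = X1 p) →
      (∀ u : ℝ, c (u + a) = c u) →
      (∀ u1 : ℝ, (∫ t in (0:ℝ)..b, (κ (u1, t) * g (u1, t) +
          pd1 (fun q => g q * X1 q) (u1, t))) = 0) →
      ∀ p : ℝ × ℝ, X2 (p.1 + a, p.2 + b) = X2 p) := by
  have hGX1 : ContDiff ℝ (⊤ : ℕ∞) (fun q : ℝ × ℝ => g q * X1 q) := hg.mul hX1
  have hpd1GX1 : ContDiff ℝ (⊤ : ℕ∞) (pd1 (fun q : ℝ × ℝ => g q * X1 q)) := by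
    have h1 : ContDiff ℝ (⊤ : ℕ∞) (fderiv ℝ (fun q : ℝ × ℝ => g q * X1 q)) :=
      hGX1.fderiv_right (by simp)
    exact h1.clm_apply contDiff_const
  set F : ℝ × ℝ → ℝ :=
    fun q => κ q * g q + pd1 (fun q : ℝ × ℝ => g q * X1 q) q with hF_def
  have hF : ContDiff ℝ (⊤ : ℕ∞) F := (hκ.mul hg).add hpd1GX1
  have hX2' : ∀ p : ℝ × ℝ, X2 p =
      -(1 / g p) * ((∫ t in (0:ℝ)..p.2, F (p.1, t)) + c p.1 + c0) := by
    intro q; rw [hX2 q]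
  have hintc : ∀ (u a' b' : ℝ), IntervalIntegrable (fun t => F (u, t)) volume a' b' :=
    fun u a' b' =>
      (hF.continuous.comp (continuous_const.prodMk continuous_id)).intervalIntegrable a' b'
  constructor
  · intro p
    obtain ⟨L, hL, hL1⟩ := aux_hasFDerivAt_param_integral F hF p
    have hgX2 : (fun q => g q * X2 q)
        = fun q : ℝ × ℝ => -((∫ t in (0:ℝ)..q.2, F (q.1, t)) + c q.1 + c0) := by
      funext q
      rw [hX2' q]
      have : g q ≠ 0 := (hgpos q).ne'
      field_simp
    have hcd : HasFDerivAt (fun q : ℝ × ℝ => c q.1)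
        ((deriv c p.1) • ContinuousLinearMap.fst ℝ ℝ ℝ) p :=
      ((hc.differentiable (by simp) p.1).hasDerivAt).comp_hasFDerivAt p hasFDerivAt_fst
    have hH : HasFDerivAt (fun q : ℝ × ℝ => -((∫ t in (0:ℝ)..q.2, F (q.1, t)) + c q.1 + c0))
        (-(L + (deriv c p.1) • ContinuousLinearMap.fst ℝ ℝ ℝ)) p :=
      ((hL.add hcd).add_const c0).neg
    have hpd2 : pd2 (fun q => g q * X2 q) p = -(F p) := by
      rw [hgX2]
      unfold pd2
      rw [hH.fderiv]
      simp [hL1]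
    rw [hpd2]
    have hgp2 : g p ≠ 0 := (hgpos p).ne'
    have hFp : F p = κ p * g p + pd1 (fun q : ℝ × ℝ => g q * X1 q) p := rfl
    rw [hFp]
    field_simp
    ring
  · intro a b hκp hgp hX1p hcp hzero p
    have hzero' : ∀ u1 : ℝ, (∫ t in (0:ℝ)..b, F (u1, t)) = 0 := by
      intro u1; have := hzero u1; simpa only [hF_def] using this
    have hT : ∀ q : ℝ × ℝ, HasFDerivAt (fun x : ℝ × ℝ => (x.1 + a, x.2 + b))
        (ContinuousLinearMap.id ℝ (ℝ × ℝ)) q := by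
      intro q
      exact (hasFDerivAt_id q).add_const ((a, b) : ℝ × ℝ)
    have hper1 : ∀ q : ℝ × ℝ, pd1 (fun q : ℝ × ℝ => g q * X1 q) (q.1 + a, q.2 + b)
        = pd1 (fun q : ℝ × ℝ => g q * X1 q) q := by
      intro q
      have hdiff := (hGX1.differentiable (by simp) ((q.1 + a, q.2 + b) : ℝ × ℝ)).hasFDerivAt
      have hcomp := hdiff.comp q (hT q)
      have heq : ((fun x : ℝ × ℝ => g x * X1 x) ∘ fun x : ℝ × ℝ => (x.1 + a, x.2 + b))
          = fun x : ℝ × ℝ => g x * X1 x := by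
        funext x
        simp [Function.comp, hgp x, hX1p x]
      rw [heq] at hcomp
      unfold pd1
      rw [hcomp.fderiv]
      simp
    have hFper : ∀ q : ℝ × ℝ, F (q.1 + a, q.2 + b) = F q := by
      intro q
      simp only [hF_def]
      have h1 := hκp q
      have h2 := hgp q
      have h3 := hper1 q
      rw [h1, h2, h3]
    have hF12 : ∀ u t : ℝ, F (u + a, t) = F (u, t - b) := by
      intro u t
      have := hFper (u, t - b)
      simpa using this
    have hI : (∫ t in (0:ℝ)..(p.2 + b), F (p.1 + a, t)) = ∫ t in (0:ℝ)..p.2, F (p.1, t) := by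
      have e1 : (∫ t in (0:ℝ)..(p.2 + b), F (p.1 + a, t))
          = ∫ t in (0:ℝ)..(p.2 + b), F (p.1, t - b) :=
        intervalIntegral.integral_congr fun t _ => hF12 p.1 t
      have e2 : (∫ t in (0:ℝ)..(p.2 + b), F (p.1, t - b))
          = ∫ t in ((0:ℝ) - b)..(p.2 + b - b), F (p.1, t) :=
        intervalIntegral.integral_comp_sub_right (fun t => F (p.1, t)) b
      have e3 : (∫ t in ((0:ℝ) - b)..(p.2 + b - b), F (p.1, t))
          = ∫ t in (-b)..p.2, F (p.1, t) := by norm_num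
      have e4 : (∫ t in (-b)..(0:ℝ), F (p.1, t)) + (∫ t in (0:ℝ)..p.2, F (p.1, t))
          = ∫ t in (-b)..p.2, F (p.1, t) :=
        intervalIntegral.integral_add_adjacent_intervals (hintc _ _ _) (hintc _ _ _)
      have e5 : (∫ t in (-b)..(0:ℝ), F (p.1, t)) = 0 := by
        have e6 : (∫ t in (0:ℝ)..b, F (p.1, t - b))
            = ∫ t in ((0:ℝ) - b)..(b - b), F (p.1, t) :=
          intervalIntegral.integral_comp_sub_right (fun t => F (p.1, t)) b
        have e7 : (∫ t in (0:ℝ)..b, F (p.1, t - b)) = ∫ t in (0:ℝ)..b, F (p.1 + a, t) :=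
          intervalIntegral.integral_congr fun t _ => (hF12 p.1 t).symm
        rw [e7, hzero' (p.1 + a)] at e6
        have hb0 : ((0:ℝ) - b) = -b := by ring
        rw [hb0, sub_self] at e6
        exact e6.symm
      rw [e1, e2, e3, ← e4, e5, zero_add]
    have h1 := hX2' ((p.1 + a, p.2 + b) : ℝ × ℝ)
    simp only at h1
    rw [h1, hX2' p, hgp p, hcp p.1, hI]
end
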